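/- Suppose K = G ⋈ H is an internal Zappa–Szép product of monoids and both G and H are Garside monoids. Then K is a Garside monoid; moreover D = D_G ∨ D_H is a Garside element of K, where D_G = ⋁_{a atom of G} Δ_a^G and D_H = ⋁_{a atom of H} Δ_a^H. -/

import Mathlib

namespace ZSPaper

/-- Internal Zappa–Szép product: every element of `K` has a unique `GH`-decomposition
and a unique `HG`-decomposition. -/
structure ZS (K : Type*) [Monoid K] (G H : Submonoid K) : Prop where
  exGH : ∀ k : K, ∃! p : G × H, (p.1 : K) * (p.2 : K) = k
  exHG : ∀ k : K, ∃! p : H × G, (p.1 : K) * (p.2 : K) = k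

variable {K : Type*} [Monoid K] {G H : Submonoid K}

/-- `h ▷ g`, defined by `h * g = (h ▷ g) * (h ◁ g)`. -/
noncomputable def ZS.rtr (zs : ZS K G H) (h : H) (g : G) : G :=
  ((zs.exGH ((h : K) * (g : K))).choose).1

/-- `h ◁ g`, defined by `h * g = (h ▷ g) * (h ◁ g)`. -/
noncomputable def ZS.rtl (zs : ZS K G H) (h : H) (g : G) : H :=
  ((zs.exGH ((h : K) * (g : K))).choose).2

/-- `g ▶ h`, defined by `g * h = (g ▶ h) * (g ◀ h)`. -/
noncomputable def ZS.ltr (zs : ZS K G H) (g : G) (h : H) : H :=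
  ((zs.exHG ((g : K) * (h : K))).choose).1

/-- `g ◀ h`, defined by `g * h = (g ▶ h) * (g ◀ h)`. -/
noncomputable def ZS.ltl (zs : ZS K G H) (g : G) (h : H) : G :=
  ((zs.exHG ((g : K) * (h : K))).choose).2

/-- Right divisibility: `x` is a suffix of `y`. -/
def RDvd {M : Type*} [Monoid M] (x y : M) : Prop := ∃ u, y = u * x

/-- An atom of a monoid. -/
def MAtom {M : Type*} [Monoid M] (a : M) : Prop :=
  a ≠ 1 ∧ ∀ u v : M, a = u * v → u = 1 ∨ v = 1

/-- An atomic monoid: generated by its atoms, with bounded lengths of atomic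
decompositions. -/
def Atomic (M : Type*) [Monoid M] : Prop :=
  (∀ x : M, ∃ l : List M, (∀ a ∈ l, MAtom a) ∧ l.prod = x) ∧
  ∀ x : M, ∃ N : ℕ, ∀ l : List M, (∀ a ∈ l, MAtom a) → l.prod = x → l.length ≤ N

/-- `m` is the least common upper bound of the set `S` with respect to
left divisibility. -/
def IsDvdLUB {M : Type*} [Monoid M] (S : Set M) (m : M) : Prop :=
  (∀ s ∈ S, s ∣ m) ∧ ∀ n, (∀ s ∈ S, s ∣ n) → m ∣ n

/-- `m` is the least common upper bound of `x` and `y` with respect to left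
divisibility. -/
def IsDvdLCM {M : Type*} [Monoid M] (x y m : M) : Prop :=
  x ∣ m ∧ y ∣ m ∧ ∀ n, x ∣ n → y ∣ n → m ∣ n

/-- `d = Δ_x`, the least common upper bound of `{ y \ x : y ∈ M }`, where
`y * (y \ x) = y ∨ x`. -/
def IsDeltaOf {M : Type*} [Monoid M] (x d : M) : Prop :=
  IsDvdLUB {t : M | ∃ y, IsDvdLCM y x (y * t)} d

/-- A Garside structure on a monoid `M` with Garside element `Δ`. -/
structure GarsideStructure (M : Type*) [Monoid M] (Δ : M) : Prop where
  mul_left_cancel : ∀ a b c : M, a * b = a * c → b = c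
  mul_right_cancel : ∀ a b c : M, b * a = c * a → b = c
  atomic : Atomic M
  meet_left : ∀ x y : M, ∃ d, d ∣ x ∧ d ∣ y ∧ ∀ e, e ∣ x → e ∣ y → e ∣ d
  join_left : ∀ x y : M, ∃ m, x ∣ m ∧ y ∣ m ∧ ∀ n, x ∣ n → y ∣ n → m ∣ n
  meet_right : ∀ x y : M, ∃ d, RDvd d x ∧ RDvd d y ∧ ∀ e, RDvd e x → RDvd e y → RDvd e d
  join_right : ∀ x y : M, ∃ m, RDvd x m ∧ RDvd y m ∧ ∀ n, RDvd x n → RDvd y n → RDvd m n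
  balanced : ∀ x, x ∣ Δ ↔ RDvd x Δ
  div_finite : {x : M | x ∣ Δ}.Finite
  div_gen : Submonoid.closure {x : M | x ∣ Δ} = ⊤

end ZSPaper

/-!
Everything is governed by lengths. Let `‖x‖` be the maximal length of an atomic decomposition.
Every `k = g h ∈ K` has `‖k‖ = ‖g‖ + ‖h‖`, which makes `K` atomic with the atoms of `G` and `H`
as atoms. The two decompositions of `h g = (h ▷ g) (h ◁ g)` give
`‖h ▷ g‖ + ‖h ◁ g‖ = ‖h‖ + ‖g‖`, and since neither action shortens, both preserve lengths. Being injective, they are bijections on the finite length levels, so they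
preserve divisibility and lcms. Divisibility in `K` reads
`gx hx ∣ gz hz ↔ ∃ c e, gx c = gz ∧ c ▶ e = hx ∧ e ∣ hz`, and from it lcms in `K` are built out
of lcms in `G` and `H` (symmetrically on the right); meets exist since divisor sets are finite.

`D_G` is the lcm of the complements `y \ a` of the atoms of `G`. The actions map these
complements to complements of atoms, so `h ▷ D_G = D_G` and `g ▶ D_H = D_H`. Hence for `a ∈ G`,
`a \ D_H = D_H` and `a \ D_G ∣ D_G`, so `a \ D ∣ D` for `D = D_G ∨ D_H`; likewise for `H`, and
thus `k \ D ∣ D` for every `k = g h`. Finally `v ↦ v \ D` injects the finite set of divisors of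
`D` into itself, so it is onto, which makes `D` balanced.
-/

namespace ZSPaper

section LUB

variable {α β : Type*}

/-- `IsDvdLUB` is `IsLUBOf (· ∣ ·)`; the general form also serves right divisibility `RDvd`. -/
def IsLUBOf (r : α → α → Prop) (S : Set α) (m : α) : Prop :=
  (∀ s ∈ S, r s m) ∧ ∀ n, (∀ s ∈ S, r s n) → r m n

theorem IsLUBOf.unique {r : α → α → Prop} (antisymm : ∀ x y, r x y → r y x → x = y)
    {S : Set α} {m m' : α} (h : IsLUBOf r S m) (h' : IsLUBOf r S m') : m = m' :=
  antisymm _ _ (h.2 m' h'.1) (h'.2 m h.1)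

theorem IsLUBOf.image {r : α → α → Prop} {s : β → β → Prop} {f : α → β}
    (hf : Function.Surjective f) (hfr : ∀ x y, s (f x) (f y) ↔ r x y) {S : Set α} {m : α}
    (h : IsLUBOf r S m) : IsLUBOf s (f '' S) (f m) := by
  refine ⟨?_, fun n hn => ?_⟩
  · rintro _ ⟨x, hx, rfl⟩
    exact (hfr x m).2 (h.1 x hx)
  · obtain ⟨n, rfl⟩ := hf n
    exact (hfr m n).2 (h.2 n fun x hx => (hfr x n).1 (hn _ ⟨x, hx, rfl⟩))

theorem isLUBOf_pair_iff {r : α → α → Prop} {x y m : α} :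
    IsLUBOf r {x, y} m ↔ r x m ∧ r y m ∧ ∀ n, r x n → r y n → r m n := by
  simp [IsLUBOf, and_assoc]

theorem exists_isLUBOf_of_finite {r : α → α → Prop} (trans : ∀ x y z, r x y → r y z → r x z)
    (bot : α) (bot_le : ∀ x, r bot x) (exists_pair : ∀ x y, ∃ m, IsLUBOf r {x, y} m)
    {S : Set α} (hS : S.Finite) : ∃ m, IsLUBOf r S m := by
  induction S, hS using Set.Finite.induction_on with
  | empty => exact ⟨bot, by simp [IsLUBOf, bot_le]⟩
  | @insert a S _ _ ih =>
    obtain ⟨m, hm⟩ := ih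
    obtain ⟨j, hj⟩ := exists_pair a m
    obtain ⟨haj, hmj, hjmin⟩ := isLUBOf_pair_iff.1 hj
    refine ⟨j, ?_, fun n hn => hjmin n (hn a (Set.mem_insert a S)) ?_⟩
    · rintro s (rfl | hs)
      exacts [haj, trans _ _ _ (hm.1 s hs) hmj]
    · exact hm.2 n fun s hs => hn s (Set.mem_insert_of_mem a hs)

/-- The meet is the join of all common lower bounds. -/
theorem exists_glb_of_finite {r : α → α → Prop} (trans : ∀ x y z, r x y → r y z → r x z)
    (bot : α) (bot_le : ∀ x, r bot x) (exists_pair : ∀ x y, ∃ m, IsLUBOf r {x, y} m)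
    (finite_lowerSet : ∀ z, {x | r x z}.Finite) (x y : α) :
    ∃ d, r d x ∧ r d y ∧ ∀ e, r e x → r e y → r e d := by
  obtain ⟨d, hd⟩ := exists_isLUBOf_of_finite trans bot bot_le exists_pair
    ((finite_lowerSet x).subset fun e (he : r e x ∧ r e y) => he.1)
  exact ⟨d, hd.2 x fun e he => he.1, hd.2 y fun e he => he.2, fun e hx hy => hd.1 e ⟨hx, hy⟩⟩

end LUB

section Atomic

variable {M : Type*} [Monoid M]

theorem one_rdvd (x : M) : RDvd 1 x := ⟨x, (mul_one x).symm⟩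

theorem RDvd.trans {x y z : M} : RDvd x y → RDvd y z → RDvd x z
  | ⟨u, hu⟩, ⟨v, hv⟩ => ⟨v * u, by rw [hv, hu, mul_assoc]⟩

theorem Atomic.eq_one_of_mul_eq_one (hA : Atomic M) {u v : M} (h : u * v = 1) :
    u = 1 ∧ v = 1 := by
  suffices hu : u = 1 by exact ⟨hu, by rwa [hu, one_mul] at h⟩
  obtain ⟨lu, hlu, rfl⟩ := hA.1 u
  obtain ⟨lv, hlv, rfl⟩ := hA.1 v
  obtain ⟨N, hN⟩ := hA.2 1
  cases lu with
  | nil => rfl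
  | cons a t =>
    exfalso
    -- repeating the decomposition of `u * v = 1` gives arbitrarily long decompositions of `1`
    have hlen := hN (List.replicate (N + 1) ((a :: t) ++ lv)).flatten
      (by simp only [List.mem_flatten, List.mem_replicate]
          rintro b ⟨l, ⟨-, rfl⟩, hb⟩
          exact (List.mem_append.1 hb).elim (hlu b) (hlv b))
      (by rw [List.prod_flatten, List.map_replicate, List.prod_replicate, List.prod_append, h,
        one_pow])
    simp only [List.length_flatten, List.map_replicate, List.sum_replicate, smul_eq_mul,
      List.length_append, List.length_cons] at hlen
    nlinarith

theorem Atomic.dvd_antisymm (hA : Atomic M) (hcancel : ∀ a b c : M, a * b = a * c → b = c)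
    {x y : M} : x ∣ y → y ∣ x → x = y := by
  rintro ⟨u, rfl⟩ ⟨v, hv⟩
  have huv : u * v = 1 := hcancel x _ _ (by rw [← mul_assoc, ← hv, mul_one])
  rw [(hA.eq_one_of_mul_eq_one huv).1, mul_one]

theorem Atomic.rdvd_antisymm (hA : Atomic M) (hcancel : ∀ a b c : M, b * a = c * a → b = c)
    {x y : M} : RDvd x y → RDvd y x → x = y := by
  rintro ⟨u, rfl⟩ ⟨v, hv⟩
  have hvu : v * u = 1 := hcancel x _ _ (by rw [mul_assoc, ← hv, one_mul])
  rw [(hA.eq_one_of_mul_eq_one hvu).2, one_mul]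

/-- The length of a longest decomposition into atoms (`0` if lengths are unbounded). -/
noncomputable def maxLen (x : M) : ℕ :=
  sSup {n | ∃ l : List M, (∀ a ∈ l, MAtom a) ∧ l.prod = x ∧ l.length = n}

theorem Atomic.bddAbove_lengths (hA : Atomic M) (x : M) :
    BddAbove {n | ∃ l : List M, (∀ a ∈ l, MAtom a) ∧ l.prod = x ∧ l.length = n} := by
  obtain ⟨N, hN⟩ := hA.2 x
  exact ⟨N, fun n ⟨l, hl, hx, hn⟩ => hn ▸ hN l hl hx⟩

theorem Atomic.exists_length_eq_maxLen (hA : Atomic M) (x : M) :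
    ∃ l : List M, (∀ a ∈ l, MAtom a) ∧ l.prod = x ∧ l.length = maxLen x := by
  obtain ⟨l, hl, hx⟩ := hA.1 x
  exact Nat.sSup_mem (s := {n | ∃ l : List M, (∀ a ∈ l, MAtom a) ∧ l.prod = x ∧ l.length = n})
    ⟨l.length, l, hl, hx, rfl⟩ (hA.bddAbove_lengths x)

theorem Atomic.length_le_maxLen (hA : Atomic M) {l : List M} (hl : ∀ a ∈ l, MAtom a) :
    l.length ≤ maxLen l.prod :=
  le_csSup (hA.bddAbove_lengths l.prod) ⟨l, hl, rfl, rfl⟩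

theorem Atomic.maxLen_add_le (hA : Atomic M) (x y : M) :
    maxLen x + maxLen y ≤ maxLen (x * y) := by
  obtain ⟨lx, hlx, rfl, hx⟩ := hA.exists_length_eq_maxLen x
  obtain ⟨ly, hly, rfl, hy⟩ := hA.exists_length_eq_maxLen y
  rw [← hx, ← hy, ← List.length_append, ← List.prod_append]
  exact hA.length_le_maxLen fun a ha => (List.mem_append.1 ha).elim (hlx a) (hly a)

theorem Atomic.maxLen_eq_zero (hA : Atomic M) {x : M} : maxLen x = 0 ↔ x = 1 := by
  constructor
  · intro h
    obtain ⟨l, -, rfl, hl⟩ := hA.exists_length_eq_maxLen x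
    rw [List.eq_nil_of_length_eq_zero (hl.trans h), List.prod_nil]
  · rintro rfl
    obtain ⟨l, hl, hprod, hlen⟩ := hA.exists_length_eq_maxLen (1 : M)
    cases l with
    | nil => exact hlen.symm
    | cons a t =>
      rw [List.prod_cons] at hprod
      exact ((hl a List.mem_cons_self).1 (hA.eq_one_of_mul_eq_one hprod).1).elim

theorem Atomic.exists_atom_mul (hA : Atomic M) {x : M} (hx : x ≠ 1) :
    ∃ a y, MAtom a ∧ x = a * y ∧ maxLen x = maxLen y + 1 := by
  obtain ⟨l, hl, rfl, hlen⟩ := hA.exists_length_eq_maxLen x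
  cases l with
  | nil => exact absurd List.prod_nil hx
  | cons a t =>
    have ha := hl a List.mem_cons_self
    have ht := hA.length_le_maxLen fun b hb => hl b (List.mem_cons_of_mem a hb)
    have hsum := hA.maxLen_add_le a t.prod
    have ha0 : maxLen a ≠ 0 := fun h => ha.1 (hA.maxLen_eq_zero.1 h)
    rw [List.prod_cons] at hlen ⊢
    rw [List.length_cons] at hlen
    exact ⟨a, t.prod, ha, rfl, by omega⟩

theorem Atomic.induction (hA : Atomic M) {p : M → Prop} (one : p 1)
    (mul : ∀ a y, MAtom a → maxLen (a * y) = maxLen y + 1 → p y → p (a * y)) (x : M) : p x := by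
  induction hn : maxLen x using Nat.strong_induction_on generalizing x with
  | _ n ih =>
    by_cases hx : x = 1
    · exact hx ▸ one
    · obtain ⟨a, y, ha, rfl, hlen⟩ := hA.exists_atom_mul hx
      exact mul a y ha hlen (ih _ (by omega) y rfl)

theorem Atomic.maxLen_eq_one (hA : Atomic M) {x : M} : maxLen x = 1 ↔ MAtom x := by
  constructor
  · intro h
    refine ⟨fun hx => by simp [hA.maxLen_eq_zero.2 hx] at h, fun u v huv => ?_⟩
    have := hA.maxLen_add_le u v
    rw [← huv, h] at this
    rcases Nat.le_one_iff_eq_zero_or_eq_one.1 (le_of_add_le_left this) with hu | hu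
    · exact Or.inl (hA.maxLen_eq_zero.1 hu)
    · exact Or.inr (hA.maxLen_eq_zero.1 (by omega))
  · intro hx
    obtain ⟨a, y, ha, hxy, hlen⟩ := hA.exists_atom_mul hx.1
    rcases hx.2 a y hxy with h | h
    · exact absurd h ha.1
    · rw [hlen, hA.maxLen_eq_zero.2 h]

theorem Atomic.maxLen_le_of_dvd (hA : Atomic M) {x y : M} (h : x ∣ y) : maxLen x ≤ maxLen y := by
  obtain ⟨u, rfl⟩ := h
  exact le_of_add_le_left (hA.maxLen_add_le x u)

theorem Atomic.maxLen_le_of_rdvd (hA : Atomic M) {x y : M} (h : RDvd x y) :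
    maxLen x ≤ maxLen y := by
  obtain ⟨u, rfl⟩ := h
  exact le_of_add_le_right (hA.maxLen_add_le u x)

theorem Atomic.eq_of_dvd_of_maxLen_le (hA : Atomic M) {x y : M} (h : x ∣ y)
    (hlen : maxLen y ≤ maxLen x) : x = y := by
  obtain ⟨u, rfl⟩ := h
  have := hA.maxLen_add_le x u
  rw [hA.maxLen_eq_zero.1 (by omega : maxLen u = 0), mul_one]

theorem Atomic.finite_maxLen_le (hA : Atomic M) (hfin : {a : M | MAtom a}.Finite) (n : ℕ) :
    {x : M | maxLen x ≤ n}.Finite := by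
  induction n with
  | zero => exact (Set.finite_singleton 1).subset fun x hx => hA.maxLen_eq_zero.1 (Nat.le_zero.1 hx)
  | succ n ih =>
    refine ((hfin.image2 (· * ·) ih).insert 1).subset fun x hx => ?_
    by_cases h1 : x = 1
    · exact Or.inl h1
    · obtain ⟨a, y, ha, rfl, hlen⟩ := hA.exists_atom_mul h1
      exact Or.inr ⟨a, ha, y, show maxLen y ≤ n by change maxLen (a * y) ≤ n + 1 at hx; omega, rfl⟩

theorem Atomic.finite_dvd (hA : Atomic M) (hfin : {a : M | MAtom a}.Finite) (z : M) :
    {x : M | x ∣ z}.Finite :=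
  (hA.finite_maxLen_le hfin (maxLen z)).subset fun _ => hA.maxLen_le_of_dvd

theorem Atomic.finite_rdvd (hA : Atomic M) (hfin : {a : M | MAtom a}.Finite) (z : M) :
    {x : M | RDvd x z}.Finite :=
  (hA.finite_maxLen_le hfin (maxLen z)).subset fun _ => hA.maxLen_le_of_rdvd

/-- An injective map preserving `maxLen` permutes each finite level `{x | maxLen x ≤ n}`. -/
theorem Atomic.surjective_of_injective (hA : Atomic M) (hfin : {a : M | MAtom a}.Finite)
    {f : M → M} (hinj : Function.Injective f) (hlen : ∀ x, maxLen (f x) = maxLen x) :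
    Function.Surjective f := by
  intro w
  have := (hA.finite_maxLen_le hfin (maxLen w)).injOn_iff_bijOn_of_mapsTo
    (f := f) (fun x hx => by simpa [hlen] using hx)
  obtain ⟨x, -, hx⟩ := (this.1 hinj.injOn).surjOn (le_refl (maxLen w))
  exact ⟨x, hx⟩

theorem Atomic.closure_eq_top (hA : Atomic M) {S : Set M} (hS : ∀ a, MAtom a → a ∈ S) :
    Submonoid.closure S = ⊤ := by
  refine eq_top_iff.2 fun x _ => ?_
  obtain ⟨l, hl, rfl⟩ := hA.1 x
  exact Submonoid.list_prod_mem _ fun a ha => Submonoid.subset_closure (hS a (hl a ha))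

end Atomic

theorem isDvdLCM_iff {M : Type*} [Monoid M] {x y m : M} :
    IsDvdLCM x y m ↔ IsDvdLUB {x, y} m :=
  isLUBOf_pair_iff.symm

theorem IsDvdLCM.symm {M : Type*} [Monoid M] {x y m : M} (h : IsDvdLCM x y m) :
    IsDvdLCM y x m :=
  ⟨h.2.1, h.1, fun n hy hx => h.2.2 n hx hy⟩

structure DvdLattice (M : Type*) [Monoid M] : Prop where
  atomic : Atomic M
  mul_left_cancel : ∀ a b c : M, a * b = a * c → b = c
  mul_right_cancel : ∀ a b c : M, b * a = c * a → b = c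
  exists_lcm : ∀ x y : M, ∃ m, IsDvdLCM x y m

/-- The complement `y \ x`, characterised by `y * (y \ x) = y ∨ x`. -/
noncomputable def complement {M : Type*} [Monoid M] (y x : M) : M :=
  Classical.epsilon fun t => IsDvdLCM y x (y * t)

namespace DvdLattice

variable {M : Type*} [Monoid M] (L : DvdLattice M)
include L

theorem dvd_antisymm {x y : M} : x ∣ y → y ∣ x → x = y :=
  L.atomic.dvd_antisymm L.mul_left_cancel

theorem mul_dvd_mul_left_iff (y : M) {a b : M} : y * a ∣ y * b ↔ a ∣ b := by
  refine ⟨fun ⟨c, hc⟩ => ⟨c, L.mul_left_cancel y _ _ (by rw [hc, mul_assoc])⟩, ?_⟩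
  rintro ⟨c, rfl⟩
  exact ⟨c, (mul_assoc _ _ _).symm⟩

theorem eq_of_isDvdLCM {x y m m' : M} (h : IsDvdLCM x y m) (h' : IsDvdLCM x y m') : m = m' :=
  L.dvd_antisymm (h.2.2 m' h'.1 h'.2.1) (h'.2.2 m h.1 h.2.1)

theorem exists_isDvdLUB_of_finite {S : Set M} (hS : S.Finite) : ∃ m, IsDvdLUB S m :=
  exists_isLUBOf_of_finite (r := (· ∣ ·)) (fun _ _ _ => dvd_trans) 1 one_dvd
    (fun x y => (L.exists_lcm x y).imp fun _ => isDvdLCM_iff.1) hS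

theorem isDvdLCM_mul_complement (y x : M) : IsDvdLCM y x (y * complement y x) := by
  obtain ⟨m, hm⟩ := L.exists_lcm y x
  obtain ⟨t, rfl⟩ := hm.1
  exact Classical.epsilon_spec (p := fun t => IsDvdLCM y x (y * t)) ⟨t, hm⟩

theorem complement_eq {y x t : M} (h : IsDvdLCM y x (y * t)) : complement y x = t :=
  L.mul_left_cancel y _ _ (L.eq_of_isDvdLCM (L.isDvdLCM_mul_complement y x) h)

theorem dvd_mul_complement (y x : M) : x ∣ y * complement y x :=
  (L.isDvdLCM_mul_complement y x).2.1

theorem mul_complement_dvd {y x n : M} (hy : y ∣ n) (hx : x ∣ n) : y * complement y x ∣ n :=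
  (L.isDvdLCM_mul_complement y x).2.2 n hy hx

theorem mul_complement_of_dvd {y x : M} (h : y ∣ x) : y * complement y x = x :=
  L.dvd_antisymm (L.mul_complement_dvd h dvd_rfl) (L.dvd_mul_complement y x)

theorem complement_one_left (x : M) : complement 1 x = x :=
  L.complement_eq (by rw [one_mul]; exact ⟨one_dvd x, dvd_rfl, fun _ _ h => h⟩)

theorem complement_mul (y₁ y₂ x : M) :
    complement (y₁ * y₂) x = complement y₂ (complement y₁ x) := by
  set c := complement y₁ x
  apply L.complement_eq
  rw [mul_assoc]
  refine ⟨(L.mul_dvd_mul_left_iff y₁).2 (dvd_mul_right _ _),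
    (L.dvd_mul_complement y₁ x).trans ((L.mul_dvd_mul_left_iff y₁).2 (L.dvd_mul_complement y₂ c)),
    fun n hy hx => ?_⟩
  obtain ⟨w, rfl⟩ := L.mul_complement_dvd (dvd_of_mul_right_dvd hy) hx
  rw [mul_assoc] at hy ⊢
  rw [L.mul_dvd_mul_left_iff] at hy ⊢
  exact L.mul_complement_dvd hy (dvd_mul_right c w)

theorem complement_dvd_complement (y : M) {a b : M} (h : a ∣ b) :
    complement y a ∣ complement y b := by
  rw [← L.mul_dvd_mul_left_iff y]
  exact L.mul_complement_dvd (dvd_mul_right y _) (h.trans (L.dvd_mul_complement y b))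

theorem _root_.ZSPaper.IsDvdLUB.complement {S : Set M} {m : M} (h : IsDvdLUB S m) (y : M) :
    IsDvdLUB (complement y '' S) (complement y m) := by
  refine ⟨?_, fun n hn => ?_⟩
  · rintro _ ⟨s, hs, rfl⟩
    exact L.complement_dvd_complement y (h.1 s hs)
  · rw [← L.mul_dvd_mul_left_iff y]
    refine L.mul_complement_dvd (dvd_mul_right y n) (h.2 _ fun s hs => ?_)
    exact (L.dvd_mul_complement y s).trans ((L.mul_dvd_mul_left_iff y).2 (hn _ ⟨s, hs, rfl⟩))

theorem _root_.ZSPaper.IsDvdLCM.complement {a b m : M} (h : IsDvdLCM a b m) (y : M) :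
    IsDvdLCM (complement y a) (complement y b) (complement y m) := by
  rw [isDvdLCM_iff, ← Set.image_pair]
  exact (isDvdLCM_iff.1 h).complement L y

/-- If `Δ` absorbs all its complements, its left and right divisors coincide: `v ↦ v \ Δ` is
an injection of the finite set of divisors of `Δ` into itself, hence onto. -/
theorem balanced_of_complement_dvd {Δ : M} (hfin : {x | x ∣ Δ}.Finite)
    (hΔ : ∀ y, complement y Δ ∣ Δ) (x : M) : x ∣ Δ ↔ RDvd x Δ := by
  constructor
  · intro hx
    have hinj : Set.InjOn (complement · Δ) {x | x ∣ Δ} := fun v hv w hw hvw =>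
      L.mul_right_cancel (complement v Δ) v w (by
        rw [L.mul_complement_of_dvd hv]
        simp only at hvw
        rw [hvw, L.mul_complement_of_dvd hw])
    obtain ⟨v, hv, rfl⟩ := ((hfin.injOn_iff_bijOn_of_mapsTo fun y _ => hΔ y).1 hinj).surjOn hx
    exact ⟨v, (L.mul_complement_of_dvd hv).symm⟩
  · rintro ⟨u, hu⟩
    have hx : complement u Δ = x :=
      L.mul_left_cancel u _ _ (by rw [L.mul_complement_of_dvd ⟨x, hu⟩, hu])
    exact hx ▸ hΔ u

end DvdLattice

theorem MAtom.mem_of_mem_closure {M : Type*} [Monoid M] {S : Set M} {a : M} (ha : MAtom a)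
    (h : a ∈ Submonoid.closure S) : a ∈ S := by
  suffices key : ∀ x ∈ Submonoid.closure S, x = 1 ∨ ∃ s ∈ S, s ≠ 1 ∧ ∃ u, x = s * u by
    obtain h1 | ⟨s, hs, hs1, u, rfl⟩ := key a h
    · exact absurd h1 ha.1
    · obtain h | rfl := ha.2 s u rfl
      · exact absurd h hs1
      · rwa [mul_one]
  intro x hx
  induction hx using Submonoid.closure_induction with
  | mem s hs => exact (em (s = 1)).imp_right fun h => ⟨s, hs, h, 1, (mul_one s).symm⟩
  | one => exact Or.inl rfl
  | mul x y _ _ hx hy =>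
    obtain rfl | ⟨s, hs, hs1, u, rfl⟩ := hx
    · rwa [one_mul]
    · exact Or.inr ⟨s, hs, hs1, u * y, mul_assoc s u y⟩

def atomComplements (M : Type*) [Monoid M] : Set M :=
  {t | ∃ y a, MAtom a ∧ complement y a = t}

namespace GarsideStructure

variable {M : Type*} [Monoid M] {Δ : M} (gs : GarsideStructure M Δ)
include gs

theorem dvdLattice : DvdLattice M :=
  ⟨gs.atomic, gs.mul_left_cancel, gs.mul_right_cancel, gs.join_left⟩

theorem atom_dvd {a : M} (ha : MAtom a) : a ∣ Δ :=
  ha.mem_of_mem_closure (gs.div_gen ▸ Submonoid.mem_top a)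

theorem finite_atoms : {a : M | MAtom a}.Finite :=
  gs.div_finite.subset fun _ => gs.atom_dvd

theorem complement_dvd (y : M) {x : M} (hx : x ∣ Δ) : complement y x ∣ Δ := by
  induction y using gs.atomic.induction generalizing x with
  | one => rwa [gs.dvdLattice.complement_one_left]
  | mul a y ha _ ih =>
    rw [gs.dvdLattice.complement_mul]
    apply ih
    obtain ⟨z, hz⟩ := gs.atom_dvd ha
    -- `z` divides `Δ = a * z` on the left because it does on the right
    refine ((gs.dvdLattice.mul_dvd_mul_left_iff a).1 ?_).trans ((gs.balanced z).2 ⟨a, hz⟩)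
    rw [← hz]
    exact gs.dvdLattice.mul_complement_dvd ⟨z, hz⟩ hx

theorem finite_atomComplements : (atomComplements M).Finite :=
  gs.div_finite.subset fun _ ⟨y, _, ha, ht⟩ => ht ▸ gs.complement_dvd y (gs.atom_dvd ha)

/-- The element `D_M` of the paper, here defined as the lcm of all complements of atoms;
`isDvdLUB_deltas` shows that it is `⋁ₐ Δ_a`. -/
noncomputable def minGarside : M :=
  (gs.dvdLattice.exists_isDvdLUB_of_finite gs.finite_atomComplements).choose

theorem isDvdLUB_minGarside : IsDvdLUB (atomComplements M) gs.minGarside :=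
  (gs.dvdLattice.exists_isDvdLUB_of_finite gs.finite_atomComplements).choose_spec

theorem isDvdLUB_deltas :
    IsDvdLUB {d | ∃ a, MAtom a ∧ IsDeltaOf a d} gs.minGarside := by
  have L := gs.dvdLattice
  refine ⟨?_, fun n hn => gs.isDvdLUB_minGarside.2 n ?_⟩
  · rintro d ⟨a, ha, hd⟩
    exact hd.2 _ fun t ⟨y, hy⟩ => gs.isDvdLUB_minGarside.1 t ⟨y, a, ha, L.complement_eq hy⟩
  · rintro _ ⟨y, a, ha, rfl⟩
    have hfin : {t | ∃ y, IsDvdLCM y a (y * t)}.Finite :=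
      gs.div_finite.subset fun t ⟨z, hz⟩ =>
        L.complement_eq hz ▸ gs.complement_dvd z (gs.atom_dvd ha)
    obtain ⟨d, hd⟩ := L.exists_isDvdLUB_of_finite hfin
    exact (hd.1 _ ⟨y, L.isDvdLCM_mul_complement y a⟩).trans (hn d ⟨a, ha, hd⟩)

theorem complement_minGarside_dvd (y : M) : complement y gs.minGarside ∣ gs.minGarside := by
  refine ((gs.isDvdLUB_minGarside.complement gs.dvdLattice y).2 _ ?_)
  rintro _ ⟨_, ⟨z, a, ha, rfl⟩, rfl⟩
  rw [← gs.dvdLattice.complement_mul]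
  exact gs.isDvdLUB_minGarside.1 _ ⟨z * y, a, ha, rfl⟩

theorem atom_dvd_minGarside {a : M} (ha : MAtom a) : a ∣ gs.minGarside :=
  gs.isDvdLUB_minGarside.1 a ⟨1, a, ha, gs.dvdLattice.complement_one_left a⟩

end GarsideStructure

theorem MAtom.of_coe {K : Type*} [Monoid K] {S : Submonoid K} {s : S} (h : MAtom (s : K)) :
    MAtom s :=
  ⟨fun hs => h.1 (by rw [hs, OneMemClass.coe_one]), fun u v huv =>
    (h.2 u v (by rw [huv, Submonoid.coe_mul])).imp Subtype.ext Subtype.ext⟩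

namespace ZS

variable {K : Type*} [Monoid K] {G H : Submonoid K}

/-- Exchanging the roles of `G` and `H`. By proof irrelevance `zs.swap.rtr g h` and
`zs.swap.rtl g h` are definitionally `zs.ltr g h` and `zs.ltl g h`, so every statement about
`▷, ◁` also gives the corresponding one about `▶, ◀`. -/
theorem swap (zs : ZS K G H) : ZS K H G := ⟨zs.exHG, zs.exGH⟩

variable (zs : ZS K G H)
include zs

/-- The `GH`-decomposition; the `HG`-decomposition is `zs.swap.gh`. -/
noncomputable def gh (k : K) : G × H := (zs.exGH k).choose

theorem gh_spec (k : K) : ((zs.gh k).1 : K) * (zs.gh k).2 = k :=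
  (zs.exGH k).choose_spec.1

theorem gh_eq {g : G} {h : H} {k : K} (hk : (g : K) * h = k) : zs.gh k = (g, h) :=
  ((zs.exGH k).choose_spec.2 (g, h) hk).symm

theorem gh_coe_mul (g : G) (k : K) : zs.gh (g * k) = (g * (zs.gh k).1, (zs.gh k).2) :=
  zs.gh_eq (by rw [Submonoid.coe_mul, mul_assoc, gh_spec])

theorem gh_mul_coe (k : K) (h : H) : zs.gh (k * h) = ((zs.gh k).1, (zs.gh k).2 * h) :=
  zs.gh_eq (by rw [Submonoid.coe_mul, ← mul_assoc, gh_spec])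

theorem rtr_mul_rtl (h : H) (g : G) : (zs.rtr h g : K) * zs.rtl h g = h * g :=
  zs.gh_spec _

theorem rtr_rtl_eq {h : H} {g g' : G} {h' : H} (he : (g' : K) * h' = h * g) :
    zs.rtr h g = g' ∧ zs.rtl h g = h' :=
  Prod.ext_iff.1 (zs.gh_eq he)

theorem gh_coe_mul_coe (h : H) (k : K) :
    zs.gh (h * k) = (zs.rtr h (zs.gh k).1, zs.rtl h (zs.gh k).1 * (zs.gh k).2) :=
  zs.gh_eq (by rw [Submonoid.coe_mul, ← mul_assoc, rtr_mul_rtl, mul_assoc, gh_spec])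

theorem rtr_one (h : H) : zs.rtr h 1 = 1 ∧ zs.rtl h 1 = h :=
  zs.rtr_rtl_eq (by simp)

theorem one_rtr (g : G) : zs.rtr 1 g = g ∧ zs.rtl 1 g = 1 :=
  zs.rtr_rtl_eq (by simp)

theorem rtr_mul (h : H) (g₁ g₂ : G) :
    zs.rtr h (g₁ * g₂) = zs.rtr h g₁ * zs.rtr (zs.rtl h g₁) g₂ ∧
      zs.rtl h (g₁ * g₂) = zs.rtl (zs.rtl h g₁) g₂ :=
  zs.rtr_rtl_eq (by
    simp only [Submonoid.coe_mul]
    rw [mul_assoc, rtr_mul_rtl, ← mul_assoc, rtr_mul_rtl, mul_assoc])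

theorem mul_rtr (h₁ h₂ : H) (g : G) :
    zs.rtr (h₁ * h₂) g = zs.rtr h₁ (zs.rtr h₂ g) ∧
      zs.rtl (h₁ * h₂) g = zs.rtl h₁ (zs.rtr h₂ g) * zs.rtl h₂ g :=
  zs.rtr_rtl_eq (by
    simp only [Submonoid.coe_mul]
    rw [← mul_assoc, rtr_mul_rtl, mul_assoc, rtr_mul_rtl, mul_assoc])

theorem ltr_mul_ltl (g : G) (h : H) : (zs.ltr g h : K) * zs.ltl g h = g * h :=
  zs.swap.rtr_mul_rtl g h

theorem ltr_mul (g : G) (h₁ h₂ : H) :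
    zs.ltr g (h₁ * h₂) = zs.ltr g h₁ * zs.ltr (zs.ltl g h₁) h₂ ∧
      zs.ltl g (h₁ * h₂) = zs.ltl (zs.ltl g h₁) h₂ :=
  zs.swap.rtr_mul g h₁ h₂

theorem mul_ltr (g₁ g₂ : G) (h : H) :
    zs.ltr (g₁ * g₂) h = zs.ltr g₁ (zs.ltr g₂ h) ∧
      zs.ltl (g₁ * g₂) h = zs.ltl g₁ (zs.ltr g₂ h) * zs.ltl g₂ h :=
  zs.swap.mul_rtr g₁ g₂ h

theorem ltr_rtr (h : H) (g : G) :
    zs.ltr (zs.rtr h g) (zs.rtl h g) = h ∧ zs.ltl (zs.rtr h g) (zs.rtl h g) = g :=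
  zs.swap.rtr_rtl_eq (zs.rtr_mul_rtl h g).symm

theorem rtr_ltr (g : G) (h : H) :
    zs.rtr (zs.ltr g h) (zs.ltl g h) = g ∧ zs.rtl (zs.ltr g h) (zs.ltl g h) = h :=
  zs.swap.ltr_rtr g h

theorem rtr_eq_one {h : H} {g : G} (he : zs.rtr h g = 1) : g = 1 := by
  -- `h * g` then lies in `H`, so its `HG`-decomposition is also `(h ◁ g, 1)`
  have hk : ((zs.rtl h g : H) : K) * ((1 : G) : K) = h * g := by
    rw [← zs.rtr_mul_rtl h g, he]; simp
  exact (Prod.ext_iff.1 ((zs.swap.gh_eq hk).symm.trans (zs.swap.gh_eq rfl))).2.symm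

theorem rtl_eq_one {h : H} {g : G} (he : zs.rtl h g = 1) : h = 1 := by
  have hk : ((1 : H) : K) * ((zs.rtr h g : G) : K) = h * g := by
    rw [← zs.rtr_mul_rtl h g, he]; simp
  exact (Prod.ext_iff.1 ((zs.swap.gh_eq hk).symm.trans (zs.swap.gh_eq rfl))).1.symm

theorem coe_dvd_iff (g : G) (z : K) : (g : K) ∣ z ↔ g ∣ (zs.gh z).1 := by
  constructor
  · rintro ⟨u, rfl⟩
    rw [gh_coe_mul]
    exact dvd_mul_right g _
  · rintro ⟨c, hc⟩
    refine ⟨c * (zs.gh z).2, ?_⟩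
    rw [← mul_assoc, ← Submonoid.coe_mul, ← hc, gh_spec]

theorem mAtom_cases {x : K} (hx : MAtom x) :
    (∃ a : G, MAtom a ∧ x = a) ∨ ∃ b : H, MAtom b ∧ x = b := by
  rw [← zs.gh_spec x] at hx ⊢
  rcases hx.2 _ _ rfl with h1 | h1
  · rw [h1, one_mul] at hx ⊢
    exact Or.inr ⟨_, hx.of_coe, rfl⟩
  · rw [h1, mul_one] at hx ⊢
    exact Or.inl ⟨_, hx.of_coe, rfl⟩

theorem mAtom_coe (hH : Atomic H) {a : G} (ha : MAtom a) : MAtom (a : K) := by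
  refine ⟨fun h1 => ha.1 (Subtype.ext h1), fun u v huv => ?_⟩
  have hu := zs.gh_spec u
  have hv := zs.swap.gh_spec v
  set gu := (zs.gh u).1
  set hu' := (zs.gh u).2
  set hv' := (zs.swap.gh v).1
  set gv := (zs.swap.gh v).2
  -- `u v = gu (hu' hv') gv` gives a `GH`-decomposition of `a`, whose `H`-part must be `1`
  have key : zs.gh (a : K) = (gu * zs.rtr (hu' * hv') gv, zs.rtl (hu' * hv') gv) := by
    refine zs.gh_eq ?_
    rw [Submonoid.coe_mul, mul_assoc, rtr_mul_rtl, huv, ← hu, ← hv]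
    simp only [Submonoid.coe_mul, mul_assoc]
  obtain ⟨h1, h2⟩ := Prod.ext_iff.1 (key.symm.trans (zs.gh_eq (g := a) (h := 1) (by simp)))
  obtain ⟨hu1, hv1⟩ := hH.eq_one_of_mul_eq_one (zs.rtl_eq_one h2)
  rw [hu1, hv1, one_mul, (zs.one_rtr gv).1] at h1
  refine (ha.2 _ _ h1.symm).imp (fun h => ?_) (fun h => ?_)
  · rw [← hu, h, hu1]; simp
  · rw [← hv, h, hv1]; simp

theorem mul_left_cancel_coe (hG_cancel : ∀ a b c : G, a * b = a * c → b = c) (g : G) {b c : K}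
    (he : (g : K) * b = g * c) : b = c := by
  obtain ⟨e₁, e₂⟩ := Prod.ext_iff.1 <|
    (zs.gh_coe_mul g b).symm.trans ((congrArg zs.gh he).trans (zs.gh_coe_mul g c))
  rw [← zs.gh_spec b, ← zs.gh_spec c, hG_cancel g _ _ e₁, e₂]

theorem mul_right_cancel_coe (hH_cancel : ∀ a b c : H, b * a = c * a → b = c) (h : H) {b c : K}
    (he : b * h = c * h) : b = c := by
  obtain ⟨e₁, e₂⟩ := Prod.ext_iff.1 <|
    (zs.gh_mul_coe b h).symm.trans ((congrArg zs.gh he).trans (zs.gh_mul_coe c h))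
  rw [← zs.gh_spec b, ← zs.gh_spec c, hH_cancel h _ _ e₂, e₁]

theorem mul_left_cancel (hG_cancel : ∀ a b c : G, a * b = a * c → b = c)
    (hH_cancel : ∀ a b c : H, a * b = a * c → b = c) (a b c : K) (he : a * b = a * c) :
    b = c := by
  rw [← zs.gh_spec a, mul_assoc, mul_assoc] at he
  exact zs.swap.mul_left_cancel_coe hH_cancel _ (zs.mul_left_cancel_coe hG_cancel _ he)

theorem mul_right_cancel (hG_cancel : ∀ a b c : G, b * a = c * a → b = c)
    (hH_cancel : ∀ a b c : H, b * a = c * a → b = c) (a b c : K) (he : b * a = c * a) :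
    b = c := by
  rw [← zs.swap.gh_spec a, ← mul_assoc, ← mul_assoc] at he
  exact zs.mul_right_cancel_coe hH_cancel _ (zs.swap.mul_right_cancel_coe hG_cancel _ he)

theorem coe_mul_dvd_iff {gx gz : G} {hx hz : H} :
    (gx : K) * hx ∣ gz * hz ↔ ∃ c e, gx * c = gz ∧ zs.ltr c e = hx ∧ e ∣ hz := by
  constructor
  · rintro ⟨u, hu⟩
    obtain ⟨⟨gu, hu'⟩, rfl⟩ : ∃ p : G × H, (p.1 : K) * p.2 = u := ⟨_, zs.gh_spec u⟩
    have key : zs.gh ((gz : K) * hz) = (gx * zs.rtr hx gu, zs.rtl hx gu * hu') := by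
      refine zs.gh_eq ?_
      rw [hu]
      simp only [Submonoid.coe_mul, mul_assoc]
      rw [← mul_assoc (hx : K), ← zs.rtr_mul_rtl hx gu, mul_assoc]
    obtain ⟨hg, hh⟩ := Prod.ext_iff.1 ((zs.gh_eq rfl).symm.trans key)
    exact ⟨_, _, hg.symm, (zs.ltr_rtr hx _).1, _, hh⟩
  · rintro ⟨c, e, rfl, rfl, w, rfl⟩
    refine ⟨(zs.ltl c e : K) * w, ?_⟩
    simp only [Submonoid.coe_mul, mul_assoc]
    rw [← mul_assoc (zs.ltr c e : K), ltr_mul_ltl, mul_assoc]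

theorem coe_mul_rdvd_iff {gx gz : G} {hx hz : H} :
    RDvd ((hx : K) * gx) (hz * gz) ↔ ∃ c e, c * gx = gz ∧ zs.rtl e c = hx ∧ RDvd e hz := by
  constructor
  · rintro ⟨u, hu⟩
    obtain ⟨⟨hu', gu⟩, rfl⟩ : ∃ p : H × G, (p.1 : K) * p.2 = u := ⟨_, zs.swap.gh_spec u⟩
    have key : zs.swap.gh ((hz : K) * gz) = (hu' * zs.ltr gu hx, zs.ltl gu hx * gx) := by
      refine zs.swap.gh_eq ?_
      rw [hu]
      simp only [Submonoid.coe_mul, mul_assoc]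
      rw [← mul_assoc (zs.ltr gu hx : K), ltr_mul_ltl, mul_assoc]
    obtain ⟨hh, hg⟩ := Prod.ext_iff.1 ((zs.swap.gh_eq rfl).symm.trans key)
    exact ⟨_, _, hg.symm, (zs.rtr_ltr _ hx).2, _, hh⟩
  · rintro ⟨c, e, rfl, rfl, w, rfl⟩
    refine ⟨(w : K) * zs.rtr e c, ?_⟩
    simp only [Submonoid.coe_mul, mul_assoc]
    rw [← mul_assoc (zs.rtr e c : K), rtr_mul_rtl, mul_assoc]

theorem isDvdLCM_coe {a b m : G} (h : IsDvdLCM a b m) : IsDvdLCM (a : K) b m :=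
  ⟨map_dvd G.subtype h.1, map_dvd G.subtype h.2.1, fun n ha hb => by
    rw [zs.coe_dvd_iff] at ha hb ⊢
    exact h.2.2 _ ha hb⟩

theorem maxLen_lt_rtr_add_rtl (hG : Atomic G) (hH : Atomic H) {h : H} (hh : h ≠ 1) (g : G) :
    maxLen g < maxLen (zs.rtr h g) + maxLen (zs.rtl h g) := by
  induction g using hG.induction generalizing h with
  | one =>
    rw [(zs.rtr_one h).1, (zs.rtr_one h).2, hG.maxLen_eq_zero.2 rfl, zero_add]
    exact Nat.pos_of_ne_zero fun h0 => hh (hH.maxLen_eq_zero.1 h0)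
  | mul a y ha hlen ih =>
    rw [(zs.rtr_mul h a y).1, (zs.rtr_mul h a y).2, hlen]
    have h1 := ih (h := zs.rtl h a) fun he => hh (zs.rtl_eq_one he)
    have h2 := hG.maxLen_add_le (zs.rtr h a) (zs.rtr (zs.rtl h a) y)
    have h3 : maxLen (zs.rtr h a) ≠ 0 := fun he => ha.1 (zs.rtr_eq_one (hG.maxLen_eq_zero.1 he))
    omega

theorem length_le_maxLen_gh (hG : Atomic G) (hH : Atomic H) (l : List K)
    (hl : ∀ x ∈ l, MAtom x) : l.length ≤ maxLen (zs.gh l.prod).1 + maxLen (zs.gh l.prod).2 := by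
  induction l with
  | nil => simp
  | cons x t ih =>
    rw [List.prod_cons, List.length_cons]
    have ht := ih fun y hy => hl y (List.mem_cons_of_mem x hy)
    rcases zs.mAtom_cases (hl x List.mem_cons_self) with ⟨a, ha, rfl⟩ | ⟨b, hb, rfl⟩
    · have := hG.maxLen_add_le a (zs.gh t.prod).1
      rw [hG.maxLen_eq_one.2 ha] at this
      rw [gh_coe_mul]
      dsimp only
      omega
    · have h1 := zs.maxLen_lt_rtr_add_rtl hG hH hb.1 (zs.gh t.prod).1
      have h2 := hH.maxLen_add_le (zs.rtl b (zs.gh t.prod).1) (zs.gh t.prod).2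
      rw [gh_coe_mul_coe]
      dsimp only
      omega

theorem exists_atoms_length_eq (hG : Atomic G) (hH : Atomic H) (k : K) :
    ∃ l : List K, (∀ x ∈ l, MAtom x) ∧ l.prod = k ∧
      l.length = maxLen (zs.gh k).1 + maxLen (zs.gh k).2 := by
  obtain ⟨lg, hlg, hg, hglen⟩ := hG.exists_length_eq_maxLen (zs.gh k).1
  obtain ⟨lh, hlh, hh, hhlen⟩ := hH.exists_length_eq_maxLen (zs.gh k).2
  refine ⟨lg.map G.subtype ++ lh.map H.subtype, ?_, ?_, by simp [hglen, hhlen]⟩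
  · simp only [List.mem_append, List.mem_map]
    rintro _ (⟨a, ha, rfl⟩ | ⟨b, hb, rfl⟩)
    exacts [zs.mAtom_coe hH (hlg a ha), zs.swap.mAtom_coe hG (hlh b hb)]
  · rw [List.prod_append, List.prod_hom, List.prod_hom, hg, hh]
    exact zs.gh_spec k

theorem atomic (hG : Atomic G) (hH : Atomic H) : Atomic K :=
  ⟨fun k => (zs.exists_atoms_length_eq hG hH k).imp fun _ hl => ⟨hl.1, hl.2.1⟩,
    fun _ => ⟨_, fun l hl hk => hk ▸ zs.length_le_maxLen_gh hG hH l hl⟩⟩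

theorem maxLen_eq (hG : Atomic G) (hH : Atomic H) (k : K) :
    maxLen k = maxLen (zs.gh k).1 + maxLen (zs.gh k).2 := by
  apply le_antisymm
  · obtain ⟨l, hl, rfl, hlen⟩ := (zs.atomic hG hH).exists_length_eq_maxLen k
    exact hlen ▸ zs.length_le_maxLen_gh hG hH l hl
  · obtain ⟨l, hl, rfl, hlen⟩ := zs.exists_atoms_length_eq hG hH k
    exact hlen ▸ (zs.atomic hG hH).length_le_maxLen hl

theorem maxLen_rtr_add_rtl (hG : Atomic G) (hH : Atomic H) (h : H) (g : G) :
    maxLen (zs.rtr h g) + maxLen (zs.rtl h g) = maxLen h + maxLen g := by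
  have hGH := zs.maxLen_eq hG hH (h * g)
  have hHG := zs.swap.maxLen_eq hH hG (h * g)
  rw [zs.swap.gh_eq rfl] at hHG
  exact hGH.symm.trans hHG

theorem le_maxLen_rtr (hG : Atomic G) (h : H) (g : G) : maxLen g ≤ maxLen (zs.rtr h g) := by
  induction g using hG.induction generalizing h with
  | one => rw [hG.maxLen_eq_zero.2 rfl]; exact Nat.zero_le _
  | mul a y ha hlen ih =>
    rw [(zs.rtr_mul h a y).1, hlen]
    have h1 := hG.maxLen_add_le (zs.rtr h a) (zs.rtr (zs.rtl h a) y)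
    have h2 : maxLen (zs.rtr h a) ≠ 0 := fun he => ha.1 (zs.rtr_eq_one (hG.maxLen_eq_zero.1 he))
    have h3 := ih (zs.rtl h a)
    omega

theorem le_maxLen_rtl (hH : Atomic H) (h : H) (g : G) : maxLen h ≤ maxLen (zs.rtl h g) := by
  induction h using hH.induction generalizing g with
  | one => rw [hH.maxLen_eq_zero.2 rfl]; exact Nat.zero_le _
  | mul a y ha hlen ih =>
    rw [(zs.mul_rtr a y g).2, hlen]
    have h1 := hH.maxLen_add_le (zs.rtl a (zs.rtr y g)) (zs.rtl y g)
    have h2 : maxLen (zs.rtl a (zs.rtr y g)) ≠ 0 :=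
      fun he => ha.1 (zs.rtl_eq_one (hH.maxLen_eq_zero.1 he))
    have h3 := ih g
    omega

theorem maxLen_rtr (hG : Atomic G) (hH : Atomic H) (h : H) (g : G) :
    maxLen (zs.rtr h g) = maxLen g := by
  have := zs.maxLen_rtr_add_rtl hG hH h g
  have := zs.le_maxLen_rtr hG h g
  have := zs.le_maxLen_rtl hH h g
  omega

theorem maxLen_rtl (hG : Atomic G) (hH : Atomic H) (h : H) (g : G) :
    maxLen (zs.rtl h g) = maxLen h := by
  have := zs.maxLen_rtr_add_rtl hG hH h g
  have := zs.maxLen_rtr hG hH h g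
  omega

theorem mAtom_rtr (hG : Atomic G) (hH : Atomic H) {g : G} (hg : MAtom g) (h : H) :
    MAtom (zs.rtr h g) :=
  hG.maxLen_eq_one.1 ((zs.maxLen_rtr hG hH h g).trans (hG.maxLen_eq_one.2 hg))

theorem rtr_injective (hH_cancel : ∀ a b c : H, a * b = a * c → b = c)
    (hH_mul : ∀ x y : H, ∃ m, x ∣ m ∧ y ∣ m) (h : H) : Function.Injective (zs.rtr h) := by
  intro g₁ g₂ he
  have e₁ := zs.ltr_rtr h g₁
  have e₂ := zs.ltr_rtr h g₂
  rw [he] at e₁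
  -- act by `w = h ▷ gᵢ` on a common multiple `m = (h ◁ g₁) c₁ = (h ◁ g₂) c₂`
  obtain ⟨m, ⟨c₁, hc₁⟩, ⟨c₂, hc₂⟩⟩ := hH_mul (zs.rtl h g₁) (zs.rtl h g₂)
  have k₁ := zs.ltr_mul (zs.rtr h g₂) (zs.rtl h g₁) c₁
  have k₂ := zs.ltr_mul (zs.rtr h g₂) (zs.rtl h g₂) c₂
  rw [← hc₁, e₁.1, e₁.2] at k₁
  rw [← hc₂, e₂.1, e₂.2] at k₂
  have hltr := hH_cancel h _ _ (k₁.1.symm.trans k₂.1)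
  have hltl := k₁.2.symm.trans k₂.2
  have hk : (g₂ : K) * c₂ = g₁ * c₁ := by
    rw [← zs.ltr_mul_ltl, ← zs.ltr_mul_ltl, hltr, hltl]
  exact congrArg Prod.fst ((zs.gh_eq hk).symm.trans (zs.gh_eq rfl)).symm

theorem rtl_injective (hG_cancel : ∀ a b c : G, b * a = c * a → b = c)
    (hG_mul : ∀ x y : G, ∃ m, RDvd x m ∧ RDvd y m) (g : G) :
    Function.Injective (zs.rtl · g) := by
  intro h₁ h₂ (he : zs.rtl h₁ g = zs.rtl h₂ g)
  have e₁ := zs.ltr_rtr h₁ g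
  have e₂ := zs.ltr_rtr h₂ g
  rw [he] at e₁
  -- act on `h₂ ◁ g` by a common left multiple `m = d₁ (h₁ ▷ g) = d₂ (h₂ ▷ g)`
  obtain ⟨m, ⟨d₁, hd₁⟩, ⟨d₂, hd₂⟩⟩ := hG_mul (zs.rtr h₁ g) (zs.rtr h₂ g)
  have k₁ := zs.mul_ltr d₁ (zs.rtr h₁ g) (zs.rtl h₂ g)
  have k₂ := zs.mul_ltr d₂ (zs.rtr h₂ g) (zs.rtl h₂ g)
  rw [← hd₁, e₁.1, e₁.2] at k₁
  rw [← hd₂, e₂.1, e₂.2] at k₂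
  have hltl := hG_cancel g _ _ (k₁.2.symm.trans k₂.2)
  have hltr := k₁.1.symm.trans k₂.1
  have hk : (d₂ : K) * h₂ = d₁ * h₁ := by
    rw [← zs.ltr_mul_ltl, ← zs.ltr_mul_ltl, hltr, hltl]
  exact congrArg Prod.snd ((zs.gh_eq hk).symm.trans (zs.gh_eq rfl)).symm

section Garside

variable {ΔG : G} {ΔH : H} (gsG : GarsideStructure G ΔG) (gsH : GarsideStructure H ΔH)
include gsG gsH

theorem rtr_bijective (h : H) : Function.Bijective (zs.rtr h) :=
  have hinj := zs.rtr_injective gsH.mul_left_cancel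
    (fun x y => (gsH.join_left x y).imp fun _ hm => ⟨hm.1, hm.2.1⟩) h
  ⟨hinj, gsG.atomic.surjective_of_injective gsG.finite_atoms hinj
    (zs.maxLen_rtr gsG.atomic gsH.atomic h)⟩

theorem rtl_bijective (g : G) : Function.Bijective (zs.rtl · g) :=
  have hinj := zs.rtl_injective gsG.mul_right_cancel
    (fun x y => (gsG.join_right x y).imp fun _ hm => ⟨hm.1, hm.2.1⟩) g
  ⟨hinj, gsH.atomic.surjective_of_injective gsH.finite_atoms hinj
    fun h => zs.maxLen_rtl gsG.atomic gsH.atomic h g⟩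

theorem rtr_dvd_rtr_iff (h : H) {g₁ g₂ : G} : zs.rtr h g₁ ∣ zs.rtr h g₂ ↔ g₁ ∣ g₂ := by
  constructor
  · rintro ⟨x, hx⟩
    obtain ⟨y, rfl⟩ := (zs.rtr_bijective gsG gsH (zs.rtl h g₁)).2 x
    exact ⟨y, (zs.rtr_bijective gsG gsH h).1 (by rw [hx, (zs.rtr_mul h g₁ y).1])⟩
  · rintro ⟨c, rfl⟩
    exact ⟨_, (zs.rtr_mul h g₁ c).1⟩

theorem rtl_rdvd_rtl_iff (g : G) {h₁ h₂ : H} :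
    RDvd (zs.rtl h₁ g) (zs.rtl h₂ g) ↔ RDvd h₁ h₂ := by
  constructor
  · rintro ⟨x, hx⟩
    obtain ⟨y, rfl⟩ := (zs.rtl_bijective gsG gsH (zs.rtr h₁ g)).2 x
    exact ⟨y, (zs.rtl_bijective gsG gsH g).1 (by simp only; rw [hx, (zs.mul_rtr y h₁ g).2])⟩
  · rintro ⟨u, rfl⟩
    exact ⟨_, (zs.mul_rtr u h₁ g).2⟩

theorem isDvdLCM_rtr (h : H) {a b m : G} (hm : IsDvdLCM a b m) :
    IsDvdLCM (zs.rtr h a) (zs.rtr h b) (zs.rtr h m) := by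
  rw [isDvdLCM_iff, ← Set.image_pair]
  exact IsLUBOf.image (r := (· ∣ ·)) (s := (· ∣ ·)) (zs.rtr_bijective gsG gsH h).2
    (fun _ _ => zs.rtr_dvd_rtr_iff gsG gsH h) (isDvdLCM_iff.1 hm)

theorem isLUBOf_rdvd_rtl (g : G) {a b m : H} (hm : IsLUBOf RDvd {a, b} m) :
    IsLUBOf RDvd {zs.rtl a g, zs.rtl b g} (zs.rtl m g) := by
  rw [← Set.image_pair (zs.rtl · g)]
  exact hm.image (zs.rtl_bijective gsG gsH g).2 fun _ _ => zs.rtl_rdvd_rtl_iff gsG gsH g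

theorem ltr_bijective (g : G) : Function.Bijective (zs.ltr g) :=
  zs.swap.rtr_bijective gsH gsG g

theorem ltr_dvd_ltr_iff (g : G) {h₁ h₂ : H} : zs.ltr g h₁ ∣ zs.ltr g h₂ ↔ h₁ ∣ h₂ :=
  zs.swap.rtr_dvd_rtr_iff gsH gsG g

theorem isDvdLCM_ltr (g : G) {a b m : H} (hm : IsDvdLCM a b m) :
    IsDvdLCM (zs.ltr g a) (zs.ltr g b) (zs.ltr g m) :=
  zs.swap.isDvdLCM_rtr gsH gsG g hm

theorem exists_lcm (x y : K) : ∃ m, IsDvdLCM x y m := by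
  -- the lcm of `gx hx` and `gy hy` is `(gx ∨ gy) (ex ∨ ey)`, where `gx ∨ gy = gx cx = gy cy`,
  -- `cx ▶ ex = hx` and `cy ▶ ey = hy`
  obtain ⟨⟨gx, hx⟩, rfl⟩ : ∃ p : G × H, (p.1 : K) * p.2 = x := ⟨_, zs.gh_spec x⟩
  obtain ⟨⟨gy, hy⟩, rfl⟩ : ∃ p : G × H, (p.1 : K) * p.2 = y := ⟨_, zs.gh_spec y⟩
  obtain ⟨g₀, hg₀⟩ := gsG.join_left gx gy
  obtain ⟨cx, hcx⟩ := hg₀.1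
  obtain ⟨cy, hcy⟩ := hg₀.2.1
  obtain ⟨ex, hex⟩ := (zs.ltr_bijective gsG gsH cx).2 hx
  obtain ⟨ey, hey⟩ := (zs.ltr_bijective gsG gsH cy).2 hy
  obtain ⟨h₀, hh₀⟩ := gsH.join_left ex ey
  refine ⟨g₀ * h₀, zs.coe_mul_dvd_iff.2 ⟨cx, ex, hcx.symm, hex, hh₀.1⟩,
    zs.coe_mul_dvd_iff.2 ⟨cy, ey, hcy.symm, hey, hh₀.2.1⟩, fun z hxz hyz => ?_⟩
  rw [← zs.gh_spec z] at hxz hyz ⊢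
  obtain ⟨c, e, hc, he, hez⟩ := zs.coe_mul_dvd_iff.1 hxz
  obtain ⟨c', e', hc', he', hez'⟩ := zs.coe_mul_dvd_iff.1 hyz
  obtain ⟨d, hd⟩ := hg₀.2.2 _ ⟨c, hc.symm⟩ ⟨c', hc'.symm⟩
  obtain ⟨l, hl⟩ := gsH.join_left e e'
  refine zs.coe_mul_dvd_iff.2 ⟨d, l, hd.symm, ?_, hl.2.2 _ hez hez'⟩
  -- `d ▶ e = ex` and `d ▶ e' = ey`, and `d ▶ ·` preserves lcms
  have hde : zs.ltr d e = ex := (zs.ltr_bijective gsG gsH cx).1 <| by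
    rw [← (zs.mul_ltr cx d e).1, hex,
      ← gsG.mul_left_cancel gx c (cx * d) (by rw [hc, hd, hcx, mul_assoc]), he]
  have hde' : zs.ltr d e' = ey := (zs.ltr_bijective gsG gsH cy).1 <| by
    rw [← (zs.mul_ltr cy d e').1, hey,
      ← gsG.mul_left_cancel gy c' (cy * d) (by rw [hc', hd, hcy, mul_assoc]), he']
  have hlcm := zs.isDvdLCM_ltr gsG gsH d hl
  rw [hde, hde'] at hlcm
  exact gsH.dvdLattice.eq_of_isDvdLCM hlcm hh₀

theorem exists_rlcm (x y : K) : ∃ m, IsLUBOf RDvd {x, y} m := by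
  -- mirror image of `exists_lcm`, with `HG`-decompositions and the action `· ◁ c`
  obtain ⟨⟨hx, gx⟩, rfl⟩ : ∃ p : H × G, (p.1 : K) * p.2 = x := ⟨_, zs.swap.gh_spec x⟩
  obtain ⟨⟨hy, gy⟩, rfl⟩ : ∃ p : H × G, (p.1 : K) * p.2 = y := ⟨_, zs.swap.gh_spec y⟩
  obtain ⟨g₀, hg₀⟩ := gsG.join_right gx gy
  obtain ⟨cx, hcx⟩ := hg₀.1
  obtain ⟨cy, hcy⟩ := hg₀.2.1
  obtain ⟨ex, hex : zs.rtl ex cx = hx⟩ := (zs.rtl_bijective gsG gsH cx).2 hx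
  obtain ⟨ey, hey : zs.rtl ey cy = hy⟩ := (zs.rtl_bijective gsG gsH cy).2 hy
  obtain ⟨h₀, hh₀⟩ := gsH.join_right ex ey
  refine ⟨h₀ * g₀, isLUBOf_pair_iff.2 ⟨zs.coe_mul_rdvd_iff.2 ⟨cx, ex, hcx.symm, hex, hh₀.1⟩,
    zs.coe_mul_rdvd_iff.2 ⟨cy, ey, hcy.symm, hey, hh₀.2.1⟩, fun z hxz hyz => ?_⟩⟩
  rw [← zs.swap.gh_spec z] at hxz hyz ⊢
  obtain ⟨c, e, hc, he, hez⟩ := zs.coe_mul_rdvd_iff.1 hxz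
  obtain ⟨c', e', hc', he', hez'⟩ := zs.coe_mul_rdvd_iff.1 hyz
  obtain ⟨d, hd⟩ := hg₀.2.2 _ ⟨c, hc.symm⟩ ⟨c', hc'.symm⟩
  obtain ⟨l, hl⟩ := gsH.join_right e e'
  refine zs.coe_mul_rdvd_iff.2 ⟨d, l, hd.symm, ?_, hl.2.2 _ hez hez'⟩
  have hde : zs.rtl e d = ex := (zs.rtl_bijective gsG gsH cx).1 <| by
    show zs.rtl (zs.rtl e d) cx = zs.rtl ex cx
    rw [← (zs.rtr_mul e d cx).2, hex,
      ← gsG.mul_right_cancel gx c (d * cx) (by rw [hc, hd, hcx, mul_assoc]), he]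
  have hde' : zs.rtl e' d = ey := (zs.rtl_bijective gsG gsH cy).1 <| by
    show zs.rtl (zs.rtl e' d) cy = zs.rtl ey cy
    rw [← (zs.rtr_mul e' d cy).2, hey,
      ← gsG.mul_right_cancel gy c' (d * cy) (by rw [hc', hd, hcy, mul_assoc]), he']
  have hlcm := zs.isLUBOf_rdvd_rtl gsG gsH d (isLUBOf_pair_iff.2 hl)
  rw [hde, hde'] at hlcm
  exact hlcm.unique (fun _ _ => gsH.atomic.rdvd_antisymm gsH.mul_right_cancel)
    (isLUBOf_pair_iff.2 hh₀)

theorem dvdLattice : DvdLattice K :=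
  ⟨zs.atomic gsG.atomic gsH.atomic, zs.mul_left_cancel gsG.mul_left_cancel gsH.mul_left_cancel,
    zs.mul_right_cancel gsG.mul_right_cancel gsH.mul_right_cancel, zs.exists_lcm gsG gsH⟩

theorem isDvdLCM_coe_ltr (a : G) (e : H) : IsDvdLCM (a : K) (zs.ltr a e : K) (a * e) := by
  refine ⟨dvd_mul_right _ _, ⟨_, (zs.ltr_mul_ltl a e).symm⟩, fun z haz hhz => ?_⟩
  obtain ⟨c, hc⟩ := (zs.coe_dvd_iff a z).1 haz
  -- with `(gz, hz) = (a c, hz)`, `a ▶ e` divides the `H`-part `a ▶ (c ▶ hz)` of `z`'s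
  -- `HG`-decomposition
  have hz : zs.swap.gh z = (zs.ltr (zs.gh z).1 (zs.gh z).2, zs.ltl (zs.gh z).1 (zs.gh z).2) :=
    zs.swap.gh_eq (by rw [ltr_mul_ltl, gh_spec])
  rw [zs.swap.coe_dvd_iff, hz, hc, (zs.mul_ltr a c _).1, zs.ltr_dvd_ltr_iff gsG gsH] at hhz
  obtain ⟨e', rfl⟩ := (zs.ltr_bijective gsG gsH c).2 e
  rw [← zs.gh_spec z, hc]
  exact zs.coe_mul_dvd_iff.2 ⟨c, e', rfl, rfl, (zs.ltr_dvd_ltr_iff gsG gsH c).1 hhz⟩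

theorem complement_coe (g₁ g₂ : G) : complement (g₁ : K) g₂ = (complement g₁ g₂ : G) :=
  (zs.dvdLattice gsG gsH).complement_eq <| by
    rw [← Submonoid.coe_mul]
    exact zs.isDvdLCM_coe (gsG.dvdLattice.isDvdLCM_mul_complement g₁ g₂)

theorem rtr_minGarside (h : H) : zs.rtr h gsG.minGarside = gsG.minGarside := by
  have L := gsG.dvdLattice
  -- `(h₀ ◁ y) ▷ (y \ a) = (h₀ ▷ y) \ (h₀ ▷ a)`, so `h ▷ ·` maps complements of atoms to
  -- complements of atoms; hence `h ▷ D_G ∣ D_G`, and both have the same length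
  have hmaps : ∀ t ∈ atomComplements G, zs.rtr h t ∈ atomComplements G := by
    rintro _ ⟨y, a, ha, rfl⟩
    obtain ⟨h₀, rfl⟩ := (zs.rtl_bijective gsG gsH y).2 h
    refine ⟨zs.rtr h₀ y, zs.rtr h₀ a, zs.mAtom_rtr gsG.atomic gsH.atomic ha h₀, L.complement_eq ?_⟩
    rw [← (zs.rtr_mul h₀ y _).1]
    exact zs.isDvdLCM_rtr gsG gsH h₀ (L.isDvdLCM_mul_complement y a)
  have hdvd : zs.rtr h gsG.minGarside ∣ gsG.minGarside :=
    (IsLUBOf.image (r := (· ∣ ·)) (s := (· ∣ ·)) (zs.rtr_bijective gsG gsH h).2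
      (fun _ _ => zs.rtr_dvd_rtr_iff gsG gsH h) gsG.isDvdLUB_minGarside).2 _
      fun _ ⟨t, ht, htt⟩ => htt ▸ gsG.isDvdLUB_minGarside.1 _ (hmaps t ht)
  exact gsG.atomic.eq_of_dvd_of_maxLen_le hdvd (zs.maxLen_rtr gsG.atomic gsH.atomic h _).ge

theorem complement_coe_minGarside (g : G) :
    complement (g : K) (gsH.minGarside : K) = gsH.minGarside := by
  -- `zs.swap.rtr_minGarside` says `g ▶ D_H = D_H`
  conv_lhs => rw [← zs.swap.rtr_minGarside gsH gsG g]
  exact (zs.dvdLattice gsG gsH).complement_eq (zs.isDvdLCM_coe_ltr gsG gsH g _)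

theorem complement_coe_dvd {D : K}
    (hD : IsDvdLCM (gsG.minGarside : K) (gsH.minGarside : K) D) (g : G) :
    complement (g : K) D ∣ D := by
  have hcompl := hD.complement (zs.dvdLattice gsG gsH) g
  rw [zs.complement_coe gsG gsH, zs.complement_coe_minGarside gsG gsH] at hcompl
  exact hcompl.2.2 D ((map_dvd G.subtype (gsG.complement_minGarside_dvd g)).trans hD.1) hD.2.1

theorem complement_dvd {D : K} (hD : IsDvdLCM (gsG.minGarside : K) (gsH.minGarside : K) D)
    (k : K) : complement k D ∣ D := by
  have L := zs.dvdLattice gsG gsH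
  rw [← zs.gh_spec k, L.complement_mul]
  exact (L.complement_dvd_complement _ (zs.complement_coe_dvd gsG gsH hD _)).trans
    (zs.swap.complement_coe_dvd gsH gsG hD.symm _)

theorem finite_atoms : {x : K | MAtom x}.Finite := by
  refine ((gsG.finite_atoms.image G.subtype).union (gsH.finite_atoms.image H.subtype)).subset ?_
  rintro x hx
  rcases zs.mAtom_cases hx with ⟨a, ha, rfl⟩ | ⟨b, hb, rfl⟩
  exacts [Or.inl ⟨a, ha, rfl⟩, Or.inr ⟨b, hb, rfl⟩]

theorem garsideStructure {D : K}
    (hD : IsDvdLCM (gsG.minGarside : K) (gsH.minGarside : K) D) : GarsideStructure K D := by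
  have L := zs.dvdLattice gsG gsH
  have hfin := zs.finite_atoms gsG gsH
  refine ⟨L.mul_left_cancel, L.mul_right_cancel, L.atomic,
    exists_glb_of_finite (r := (· ∣ ·)) (fun _ _ _ => dvd_trans) 1 one_dvd
      (fun x y => (L.exists_lcm x y).imp fun _ => isDvdLCM_iff.1) (L.atomic.finite_dvd hfin),
    L.exists_lcm,
    exists_glb_of_finite (fun _ _ _ => RDvd.trans) 1 one_rdvd (zs.exists_rlcm gsG gsH)
      (L.atomic.finite_rdvd hfin),
    fun x y => (zs.exists_rlcm gsG gsH x y).imp fun _ => isLUBOf_pair_iff.1,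
    L.balanced_of_complement_dvd (L.atomic.finite_dvd hfin D) (zs.complement_dvd gsG gsH hD),
    L.atomic.finite_dvd hfin D, L.atomic.closure_eq_top fun x hx => ?_⟩
  rcases zs.mAtom_cases hx with ⟨a, ha, rfl⟩ | ⟨b, hb, rfl⟩
  · exact (map_dvd G.subtype (gsG.atom_dvd_minGarside ha)).trans hD.1
  · exact (map_dvd H.subtype (gsH.atom_dvd_minGarside hb)).trans hD.2.1

end Garside

end ZS

end ZSPaper

open ZSPaper Function

theorem stmt18 {K : Type*} [Monoid K] {G H : Submonoid K} (zs : ZS K G H)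
    (ΔG : G) (ΔH : H)
    (gsG : GarsideStructure G ΔG) (gsH : GarsideStructure H ΔH) :
    ∃ (DG : G) (DH : H) (D : K),
      IsDvdLUB {d : G | ∃ a : G, MAtom a ∧ IsDeltaOf a d} DG ∧
      IsDvdLUB {d : H | ∃ a : H, MAtom a ∧ IsDeltaOf a d} DH ∧
      IsDvdLCM (DG : K) (DH : K) D ∧
      GarsideStructure K D := by
  obtain ⟨D, hD⟩ := zs.exists_lcm gsG gsH (gsG.minGarside : K) (gsH.minGarside : K)
  exact ⟨gsG.minGarside, gsH.minGarside, D, gsG.isDvdLUB_deltas, gsH.isDvdLUB_deltas, hD,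
    zs.garsideStructure gsG gsH hD⟩
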